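/- Let V be a nonempty finite set, J : V → V → ℝ symmetric with zero diagonal and J_{pq} ≥ 0 for all p, q, and h : V → ℝ arbitrary; let ⟨·⟩ be the associated Gibbs expectation. For each p ∈ V set ρ_p = (σ_p + 1)/2 and for A ⊆ V set ρ_A = Π_{p∈A} ρ_p. Then for all subsets A, B ⊆ V: 0 ≤ ⟨ρ_A ρ_B⟩ − ⟨ρ_A⟩⟨ρ_B⟩ ≤ (1/4) · Σ_{i∈A} Σ_{j∈B} ( ⟨σ_i σ_j⟩ − ⟨σ_i⟩⟨σ_j⟩ ). -/
import Mathlib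


open Finset

/-- The spin value (±1) associated to a Boolean configuration. -/
noncomputable def spin {V : Type*} (s : V → Bool) : V → ℝ :=
  fun p => if s p then 1 else -1

/-- Boltzmann weight of a spin configuration for couplings `J` and field `h`. -/
noncomputable def isingWeight {V : Type*} [Fintype V] (J : V → V → ℝ) (h : V → ℝ)
    (s : V → Bool) : ℝ :=
  Real.exp ((1 / 2) * ∑ p, ∑ q, J p q * spin s p * spin s q + ∑ p, h p * spin s p)

/-- Gibbs expectation of an observable `f` for couplings `J` and field `h`. -/
noncomputable def isingExpect {V : Type*} [Fintype V] [DecidableEq V]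
    (J : V → V → ℝ) (h : V → ℝ) (f : (V → ℝ) → ℝ) : ℝ :=
  (∑ s : V → Bool, f (spin s) * isingWeight J h s) / ∑ s : V → Bool, isingWeight J h s

private lemma bool_aux1 (a b : Bool) :
    ((if (a ⊓ b : Bool) then (1:ℝ) else -1) + if (a ⊔ b : Bool) then 1 else -1) =
      (if a then 1 else -1) + if b then 1 else -1 := by
  cases a <;> cases b <;> simp

private lemma bool_aux2 (a b c d : Bool) :
    ((if a then (1:ℝ) else -1) * (if c then 1 else -1) +
      (if b then (1:ℝ) else -1) * (if d then 1 else -1)) ≤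
    (if (a ⊓ b : Bool) then (1:ℝ) else -1) * (if (c ⊓ d : Bool) then 1 else -1) +
      (if (a ⊔ b : Bool) then (1:ℝ) else -1) * (if (c ⊔ d : Bool) then 1 else -1) := by
  cases a <;> cases b <;> cases c <;> cases d <;> norm_num

section
variable {V : Type*} [Fintype V] [DecidableEq V] (J : V → V → ℝ) (h : V → ℝ)

lemma spin_inf_add_sup (s t : V → Bool) (p : V) :
    spin (s ⊓ t) p + spin (s ⊔ t) p = spin s p + spin t p := by
  simp only [spin, Pi.inf_apply, Pi.sup_apply]
  exact bool_aux1 _ _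

lemma spin_pair_le (s t : V → Bool) (p q : V) :
    spin s p * spin s q + spin t p * spin t q ≤
      spin (s ⊓ t) p * spin (s ⊓ t) q + spin (s ⊔ t) p * spin (s ⊔ t) q := by
  simp only [spin, Pi.inf_apply, Pi.sup_apply]
  exact bool_aux2 _ _ _ _

lemma weight_supermod (hJ : ∀ p q, 0 ≤ J p q) (s t : V → Bool) :
    isingWeight J h s * isingWeight J h t ≤
      isingWeight J h (s ⊓ t) * isingWeight J h (s ⊔ t) := by
  unfold isingWeight
  rw [← Real.exp_add, ← Real.exp_add, Real.exp_le_exp]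
  have hfield : ∑ p, h p * spin s p + ∑ p, h p * spin t p =
      ∑ p, h p * spin (s ⊓ t) p + ∑ p, h p * spin (s ⊔ t) p := by
    rw [← Finset.sum_add_distrib, ← Finset.sum_add_distrib]
    refine Finset.sum_congr rfl fun p _ => ?_
    rw [← mul_add, ← mul_add, spin_inf_add_sup]
  have hpair : (1 / 2 : ℝ) * ∑ p, ∑ q, J p q * spin s p * spin s q +
      (1 / 2) * ∑ p, ∑ q, J p q * spin t p * spin t q ≤
      (1 / 2) * ∑ p, ∑ q, J p q * spin (s ⊓ t) p * spin (s ⊓ t) q +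
      (1 / 2) * ∑ p, ∑ q, J p q * spin (s ⊔ t) p * spin (s ⊔ t) q := by
    rw [← mul_add, ← mul_add]
    refine mul_le_mul_of_nonneg_left ?_ (by norm_num)
    rw [← Finset.sum_add_distrib, ← Finset.sum_add_distrib]
    refine Finset.sum_le_sum fun p _ => ?_
    rw [← Finset.sum_add_distrib, ← Finset.sum_add_distrib]
    refine Finset.sum_le_sum fun q _ => ?_
    have h1 := spin_pair_le s t p q
    have h2 := hJ p q
    nlinarith
  linarith
end

section
set_option linter.unusedSectionVars false
variable {V : Type*} [Fintype V] [DecidableEq V] (J : V → V → ℝ) (h : V → ℝ)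

noncomputable def myE (f : (V → Bool) → ℝ) : ℝ :=
  (∑ s : V → Bool, f s * isingWeight J h s) / ∑ s : V → Bool, isingWeight J h s

lemma Zpos : 0 < ∑ s : V → Bool, isingWeight J h s :=
  Finset.sum_pos (fun s _ => Real.exp_pos _) Finset.univ_nonempty

lemma myE_const (c : ℝ) : myE J h (fun _ => c) = c := by
  unfold myE
  rw [← Finset.mul_sum, mul_div_assoc, div_self (Zpos J h).ne', mul_one]

lemma myE_add (f g : (V → Bool) → ℝ) :
    myE J h (fun s => f s + g s) = myE J h f + myE J h g := by
  unfold myE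
  rw [← add_div]
  congr 1
  rw [← Finset.sum_add_distrib]
  exact Finset.sum_congr rfl fun s _ => by ring

lemma myE_sub (f g : (V → Bool) → ℝ) :
    myE J h (fun s => f s - g s) = myE J h f - myE J h g := by
  unfold myE
  rw [← sub_div]
  congr 1
  rw [← Finset.sum_sub_distrib]
  exact Finset.sum_congr rfl fun s _ => by ring

lemma myE_cmul (c : ℝ) (f : (V → Bool) → ℝ) :
    myE J h (fun s => c * f s) = c * myE J h f := by
  unfold myE
  rw [← mul_div_assoc]
  congr 1
  rw [Finset.mul_sum]
  exact Finset.sum_congr rfl fun s _ => by ring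

/-- FKG inequality for the Ising measure. -/
lemma myE_fkg (hJ : ∀ p q, 0 ≤ J p q) (f g : (V → Bool) → ℝ)
    (hf0 : ∀ s, 0 ≤ f s) (hg0 : ∀ s, 0 ≤ g s) (hf : Monotone f) (hg : Monotone g) :
    myE J h f * myE J h g ≤ myE J h (fun s => f s * g s) := by
  have key := fkg (μ := isingWeight J h) (f := f) (g := g)
    (fun s => (Real.exp_pos _).le) hf0 hg0 hf hg
    (fun a b => weight_supermod J h hJ a b)
  have hZ := Zpos J h
  rw [show (∑ a : V → Bool, isingWeight J h a * f a) = ∑ s : V → Bool, f s * isingWeight J h s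
      from Finset.sum_congr rfl fun s _ => mul_comm _ _,
    show (∑ a : V → Bool, isingWeight J h a * g a) = ∑ s : V → Bool, g s * isingWeight J h s
      from Finset.sum_congr rfl fun s _ => mul_comm _ _,
    show (∑ a : V → Bool, isingWeight J h a * (f a * g a))
        = ∑ s : V → Bool, f s * g s * isingWeight J h s
      from Finset.sum_congr rfl fun s _ => mul_comm _ _] at key
  unfold myE
  rw [div_mul_div_comm, div_le_div_iff₀ (mul_pos hZ hZ) hZ]
  nlinarith [mul_nonneg (sub_nonneg.2 key) hZ.le]
end

section
set_option linter.unusedSectionVars false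
variable {V : Type*} [Fintype V] [DecidableEq V] (J : V → V → ℝ) (h : V → ℝ)

lemma myE_congr (f g : (V → Bool) → ℝ) (hfg : ∀ s, f s = g s) : myE J h f = myE J h g := by
  rw [funext hfg]

lemma myE_comb4 (c1 c2 c3 c4 : ℝ) (f1 f2 f3 f4 : (V → Bool) → ℝ) :
    myE J h (fun s => c1 * f1 s + c2 * f2 s + c3 * f3 s + c4 * f4 s) =
      c1 * myE J h f1 + c2 * myE J h f2 + c3 * myE J h f3 + c4 * myE J h f4 := by
  rw [myE_add J h (fun s => c1 * f1 s + c2 * f2 s + c3 * f3 s) (fun s => c4 * f4 s),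
    myE_add J h (fun s => c1 * f1 s + c2 * f2 s) (fun s => c3 * f3 s),
    myE_add J h (fun s => c1 * f1 s) (fun s => c2 * f2 s),
    myE_cmul, myE_cmul, myE_cmul, myE_cmul]

noncomputable def cov (f g : (V → Bool) → ℝ) : ℝ :=
  myE J h (fun s => f s * g s) - myE J h f * myE J h g

lemma cov_comm (f g : (V → Bool) → ℝ) : cov J h f g = cov J h g f := by
  unfold cov
  rw [myE_congr J h _ (fun s => g s * f s) (fun s => mul_comm _ _)]
  ring

lemma cov_nonneg (hJ : ∀ p q, 0 ≤ J p q) (f g : (V → Bool) → ℝ)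
    (hf0 : ∀ s, 0 ≤ f s) (hg0 : ∀ s, 0 ≤ g s) (hf : Monotone f) (hg : Monotone g) :
    0 ≤ cov J h f g :=
  sub_nonneg.2 (myE_fkg J h hJ f g hf0 hg0 hf hg)

lemma cov_nonpos (hJ : ∀ p q, 0 ≤ J p q) (f g : (V → Bool) → ℝ)
    (hf0 : ∀ s, 0 ≤ f s) (hf : Monotone f)
    (hg : Antitone g) (hg0 : ∀ s, 0 ≤ g s) (hg1 : ∀ s, g s ≤ 1) :
    cov J h f g ≤ 0 := by
  have key := myE_fkg J h hJ f (fun s => 1 - g s) hf0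
    (fun s => by simpa using hg1 s) hf (fun s t hst => by have := hg hst; simp only []; linarith)
  have e1 : myE J h (fun s => 1 - g s) = 1 - myE J h g := by
    rw [myE_congr J h _ (fun s => (fun _ => (1:ℝ)) s - g s) (fun s => rfl), myE_sub, myE_const]
  have e2 : myE J h (fun s => f s * (1 - g s)) =
      myE J h f - myE J h (fun s => f s * g s) := by
    rw [myE_congr J h _ (fun s => f s - f s * g s) (fun s => by ring), myE_sub]
  unfold cov
  rw [e1, e2] at key
  nlinarith
end

section
set_option linter.unusedSectionVars false
variable {V : Type*} [Fintype V] [DecidableEq V] (J : V → V → ℝ) (h : V → ℝ)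

lemma cov_telescope (hJ : ∀ p q, 0 ≤ J p q) (f g k : (V → Bool) → ℝ)
    (hf : Monotone f) (hg : Monotone g) (hk : Monotone k)
    (hf0 : ∀ s, 0 ≤ f s) (hf1 : ∀ s, f s ≤ 1)
    (hg0 : ∀ s, 0 ≤ g s) (hg1 : ∀ s, g s ≤ 1)
    (hk0 : ∀ s, 0 ≤ k s) (hk1 : ∀ s, k s ≤ 1) :
    cov J h (fun s => f s * g s) k ≤ cov J h f k + cov J h g k := by
  have hu_anti : Antitone (fun s => (1 - f s) * (1 - g s)) := by
    intro s t hst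
    simp only []
    have h1 := hf hst; have h2 := hg hst
    have := hf1 t; have := hg1 t; have := hf0 s; have := hg0 s
    nlinarith
  have hu0 : ∀ s, 0 ≤ (1 - f s) * (1 - g s) := fun s =>
    mul_nonneg (by linarith [hf1 s]) (by linarith [hg1 s])
  have hu1 : ∀ s, (1 - f s) * (1 - g s) ≤ 1 := fun s => by
    nlinarith [hf0 s, hg0 s, hf1 s, hg1 s]
  have hcov : cov J h k (fun s => (1 - f s) * (1 - g s)) ≤ 0 :=
    cov_nonpos J h hJ k _ hk0 hk hu_anti hu0 hu1
  have e1 : myE J h (fun s => (1 - f s) * (1 - g s)) =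
      1 - myE J h f - myE J h g + myE J h (fun s => f s * g s) := by
    rw [myE_congr J h _
        (fun s => (1:ℝ) * (fun _ => (1:ℝ)) s + (-1) * f s + (-1) * g s +
          1 * (fun s => f s * g s) s) (fun s => by simp only []; ring),
      myE_comb4, myE_const]
    ring
  have e2 : myE J h (fun s => k s * ((1 - f s) * (1 - g s))) =
      myE J h k - myE J h (fun s => f s * k s) - myE J h (fun s => g s * k s) +
        myE J h (fun s => f s * g s * k s) := by
    rw [myE_congr J h _
        (fun s => (1:ℝ) * k s + (-1) * (fun s => f s * k s) s + (-1) * (fun s => g s * k s) s +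
          1 * (fun s => f s * g s * k s) s) (fun s => by simp only []; ring),
      myE_comb4]
    ring
  unfold cov at hcov ⊢
  rw [e1, e2] at hcov
  have e3 : myE J h (fun s => (fun s => f s * g s) s * k s) =
      myE J h (fun s => f s * g s * k s) := rfl
  rw [e3]
  linarith

/-- lattice-gas occupation variable -/
noncomputable def rho (i : V) : (V → Bool) → ℝ := fun s => (spin s i + 1) / 2

lemma rho_nonneg (i : V) (s : V → Bool) : 0 ≤ rho i s := by
  unfold rho spin; cases s i <;> norm_num

lemma rho_le_one (i : V) (s : V → Bool) : rho i s ≤ 1 := by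
  unfold rho spin; cases s i <;> norm_num

lemma rho_mono (i : V) : Monotone (rho i) := by
  intro s t hst
  have hi := hst i
  unfold rho spin
  cases hs : s i <;> cases ht : t i <;>
    first
      | (rw [hs, ht] at hi; exact absurd (show (true : Bool) ≤ false from hi) (by decide))
      | norm_num

lemma prodRho_nonneg (A : Finset V) (s : V → Bool) : 0 ≤ ∏ p ∈ A, rho p s :=
  Finset.prod_nonneg fun p _ => rho_nonneg p s

lemma prodRho_le_one (A : Finset V) (s : V → Bool) : (∏ p ∈ A, rho p s) ≤ 1 :=
  Finset.prod_le_one (fun p _ => rho_nonneg p s) (fun p _ => rho_le_one p s)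

lemma prodRho_mono (A : Finset V) : Monotone (fun s => ∏ p ∈ A, rho p s) := by
  intro s t hst
  exact Finset.prod_le_prod (fun p _ => rho_nonneg p s) (fun p _ => rho_mono p hst)

lemma cov_prod_le (hJ : ∀ p q, 0 ≤ J p q) (A : Finset V) (k : (V → Bool) → ℝ)
    (hk : Monotone k) (hk0 : ∀ s, 0 ≤ k s) (hk1 : ∀ s, k s ≤ 1) :
    cov J h (fun s => ∏ p ∈ A, rho p s) k ≤ ∑ i ∈ A, cov J h (rho i) k := by
  induction A using Finset.induction_on with
  | empty =>
      simp only [Finset.prod_empty, Finset.sum_empty]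
      unfold cov
      rw [myE_congr J h _ k (fun s => one_mul _), myE_const]
      ring_nf
      exact le_refl 0
  | @insert a A ha ih =>
      have e : (fun s => ∏ p ∈ insert a A, rho p s) =
          fun s => rho a s * ∏ p ∈ A, rho p s := by
        funext s; exact Finset.prod_insert ha
      rw [e, Finset.sum_insert ha]
      calc cov J h (fun s => rho a s * ∏ p ∈ A, rho p s) k
          ≤ cov J h (rho a) k + cov J h (fun s => ∏ p ∈ A, rho p s) k :=
            cov_telescope J h hJ (rho a) (fun s => ∏ p ∈ A, rho p s) k
              (rho_mono a) (prodRho_mono A) hk (rho_nonneg a) (rho_le_one a)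
              (prodRho_nonneg A) (prodRho_le_one A) hk0 hk1
        _ ≤ _ := by linarith [ih]

lemma cov_rho_rho (i j : V) :
    cov J h (rho i) (rho j) =
      (1 / 4) * (myE J h (fun s => spin s i * spin s j) -
        myE J h (fun s => spin s i) * myE J h (fun s => spin s j)) := by
  have e1 : myE J h (fun s => rho i s * rho j s) =
      (1/4) * myE J h (fun s => spin s i * spin s j) + (1/4) * myE J h (fun s => spin s i) +
        (1/4) * myE J h (fun s => spin s j) + (1/4) * myE J h (fun _ => (1:ℝ)) := by
    rw [← myE_comb4]
    exact myE_congr J h _ _ fun s => by unfold rho; ring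
  have e2 : myE J h (rho i) =
      (1/2) * myE J h (fun s => spin s i) + (1/2) * myE J h (fun _ => (1:ℝ)) +
        0 * myE J h (fun _ => (1:ℝ)) + 0 * myE J h (fun _ => (1:ℝ)) := by
    rw [← myE_comb4]
    exact myE_congr J h _ _ fun s => by unfold rho; ring
  have e3 : myE J h (rho j) =
      (1/2) * myE J h (fun s => spin s j) + (1/2) * myE J h (fun _ => (1:ℝ)) +
        0 * myE J h (fun _ => (1:ℝ)) + 0 * myE J h (fun _ => (1:ℝ)) := by
    rw [← myE_comb4]
    exact myE_congr J h _ _ fun s => by unfold rho; ring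
  unfold cov
  rw [e1, e2, e3, myE_const]
  ring
end

/-- For ferromagnetic couplings, the covariance of lattice-gas products `ρ_A ρ_B`
is nonnegative and bounded by `(1/4)·Σ_{i∈A} Σ_{j∈B} (⟨σ_i σ_j⟩ − ⟨σ_i⟩⟨σ_j⟩)`. -/
theorem lattice_gas_covariance_bounds {V : Type*} [Fintype V] [DecidableEq V] [Nonempty V]
    (J : V → V → ℝ) (h : V → ℝ)
    (hsymm : ∀ p q, J p q = J q p) (hdiag : ∀ p, J p p = 0)
    (hJ : ∀ p q, 0 ≤ J p q)
    (A B : Finset V) :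
    0 ≤ isingExpect J h (fun σ => (∏ p ∈ A, (σ p + 1) / 2) * ∏ p ∈ B, (σ p + 1) / 2) -
        isingExpect J h (fun σ => ∏ p ∈ A, (σ p + 1) / 2) *
          isingExpect J h (fun σ => ∏ p ∈ B, (σ p + 1) / 2) ∧
    isingExpect J h (fun σ => (∏ p ∈ A, (σ p + 1) / 2) * ∏ p ∈ B, (σ p + 1) / 2) -
        isingExpect J h (fun σ => ∏ p ∈ A, (σ p + 1) / 2) *
          isingExpect J h (fun σ => ∏ p ∈ B, (σ p + 1) / 2)
      ≤ (1 / 4) * ∑ i ∈ A, ∑ j ∈ B,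
          (isingExpect J h (fun σ => σ i * σ j) -
            isingExpect J h (fun σ => σ i) * isingExpect J h (fun σ => σ j)) := by
  have hexp1 : isingExpect J h (fun σ => (∏ p ∈ A, (σ p + 1) / 2) * ∏ p ∈ B, (σ p + 1) / 2)
      = myE J h (fun s => (∏ p ∈ A, rho p s) * ∏ p ∈ B, rho p s) := rfl
  have hexpA : isingExpect J h (fun σ => ∏ p ∈ A, (σ p + 1) / 2)
      = myE J h (fun s => ∏ p ∈ A, rho p s) := rfl
  have hexpB : isingExpect J h (fun σ => ∏ p ∈ B, (σ p + 1) / 2)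
      = myE J h (fun s => ∏ p ∈ B, rho p s) := rfl
  have hexpij : ∀ i j : V, isingExpect J h (fun σ => σ i * σ j)
      = myE J h (fun s => spin s i * spin s j) := fun i j => rfl
  have hexpi : ∀ i : V, isingExpect J h (fun σ => σ i)
      = myE J h (fun s => spin s i) := fun i => rfl
  rw [hexp1, hexpA, hexpB]
  simp only [hexpij, hexpi]
  have hlow := cov_nonneg J h hJ (fun s => ∏ p ∈ A, rho p s) (fun s => ∏ p ∈ B, rho p s)
    (prodRho_nonneg A) (prodRho_nonneg B) (prodRho_mono A) (prodRho_mono B)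
  have main : cov J h (fun s => ∏ p ∈ A, rho p s) (fun s => ∏ p ∈ B, rho p s)
      ≤ ∑ i ∈ A, ∑ j ∈ B, cov J h (rho i) (rho j) := by
    calc cov J h (fun s => ∏ p ∈ A, rho p s) (fun s => ∏ p ∈ B, rho p s)
        ≤ ∑ i ∈ A, cov J h (rho i) (fun s => ∏ p ∈ B, rho p s) :=
          cov_prod_le J h hJ A _ (prodRho_mono B) (prodRho_nonneg B) (prodRho_le_one B)
      _ ≤ ∑ i ∈ A, ∑ j ∈ B, cov J h (rho i) (rho j) := by
          refine Finset.sum_le_sum fun i _ => ?_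
          rw [cov_comm]
          calc cov J h (fun s => ∏ p ∈ B, rho p s) (rho i)
              ≤ ∑ j ∈ B, cov J h (rho j) (rho i) :=
                cov_prod_le J h hJ B _ (rho_mono i) (rho_nonneg i) (rho_le_one i)
            _ = ∑ j ∈ B, cov J h (rho i) (rho j) :=
                Finset.sum_congr rfl fun j _ => cov_comm J h (rho j) (rho i)
  have main2 : cov J h (fun s => ∏ p ∈ A, rho p s) (fun s => ∏ p ∈ B, rho p s)
      ≤ (1 / 4) * ∑ i ∈ A, ∑ j ∈ B,
          (myE J h (fun s => spin s i * spin s j) -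
            myE J h (fun s => spin s i) * myE J h (fun s => spin s j)) := by
    refine main.trans (le_of_eq ?_)
    rw [Finset.mul_sum]
    refine Finset.sum_congr rfl fun i _ => ?_
    rw [Finset.mul_sum]
    exact Finset.sum_congr rfl fun j _ => cov_rho_rho J h i j
  unfold cov at hlow main2
  exact ⟨hlow, main2⟩
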